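/- Let [X,d,m] be an m-connected metric random walk space with an invariant and reversible probability measure ν, and let Ω ⊂ X be ν-measurable with 0 < ν(Ω) ≤ 1/2. If h_m(X) = λ_Ω^m = P_m(Ω)/ν(Ω), then both Ω and X∖Ω are m-calibrable. -/

import Mathlib

open MeasureTheory ENNReal Filter Set Topology

noncomputable section

variable {X : Type*} [MeasurableSpace X]

/-- The double integral `∫∫ |u(y) − u(x)| dm_x(y) dν(x)`. -/
def nlEnergy (m : X → Measure X) (ν : Measure X) (u : X → ℝ) : ℝ≥0∞ :=
  ∫⁻ x, ∫⁻ y, ENNReal.ofReal |u y - u x| ∂(m x) ∂ν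

/-- The `m`-total variation `TV_m(u) = (1/2) ∫∫ |u(y) − u(x)| dm_x(y) dν(x)`. -/
def TVm (m : X → Measure X) (ν : Measure X) (u : X → ℝ) : ℝ≥0∞ :=
  2⁻¹ * nlEnergy m ν u

/-- `u ∈ BV_m(X,ν)`: a measurable function with finite nonlocal energy. -/
def MemBVm (m : X → Measure X) (ν : Measure X) (u : X → ℝ) : Prop :=
  Measurable u ∧ nlEnergy m ν u < ⊤

/-- `u ∈ BV_m^0(X,ν)`: `u ∈ BV_m(X,ν)` vanishing a.e. outside a set `A` with `0 < ν A < ν X`. -/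
def MemBVm0 (m : X → Measure X) (ν : Measure X) (u : X → ℝ) : Prop :=
  MemBVm m ν u ∧ ∃ A : Set X, MeasurableSet A ∧ 0 < ν A ∧ ν A < ν Set.univ ∧
    ∀ᵐ x ∂ν, x ∉ A → u x = 0

/-- The `m`-interaction `L_m(A,B) = ∫_A m_x(B) dν(x)`. -/
def Lm (m : X → Measure X) (ν : Measure X) (A B : Set X) : ℝ≥0∞ :=
  ∫⁻ x in A, m x B ∂ν

/-- The `m`-perimeter `P_m(E) = L_m(E, X∖E)`. -/
def Pm (m : X → Measure X) (ν : Measure X) (E : Set X) : ℝ≥0∞ :=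
  Lm m ν E Eᶜ

/-- `ν` is invariant and reversible for `m`. -/
def Reversible (m : X → Measure X) (ν : Measure X) : Prop :=
  ∀ F : X → X → ℝ≥0∞, Measurable (Function.uncurry F) →
    ∫⁻ x, ∫⁻ y, F x y ∂(m x) ∂ν = ∫⁻ y, ∫⁻ x, F x y ∂(m y) ∂ν

/-- `x ↦ m_x(A)` is measurable for every Borel set `A`. -/
def MeasurableKernel (m : X → Measure X) : Prop :=
  ∀ A : Set X, MeasurableSet A → Measurable fun x => m x A

/-- The measure `ν ⊗ m_x` on `X × X`, given by `(ν ⊗ m_x)(U) = ∫ m_x(U_x) dν(x)`. -/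
def nuOtimes (m : X → Measure X) (ν : Measure X) : Measure (X × X) :=
  ν.bind fun x => (m x).map (Prod.mk x)

/-- The `m`-divergence `div_m z (x) = (1/2) ∫ (z(x,y) − z(y,x)) dm_x(y)`. -/
def divm (m : X → Measure X) (z : X → X → ℝ) (x : X) : ℝ :=
  2⁻¹ * ∫ y, (z x y - z y x) ∂(m x)

/-- The multivalued sign function. -/
def signSet (r : ℝ) : Set ℝ :=
  if 0 < r then {1} else if r < 0 then {-1} else Set.Icc (-1) 1

/-- `[X,d,m]` is `m`-connected with respect to `ν`. -/
def MConnected (m : X → Measure X) (ν : Measure X) : Prop :=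
  ∀ A B : Set X, MeasurableSet A → MeasurableSet B → 0 < ν A → 0 < ν B →
    A ∪ B = Set.univ → 0 < Lm m ν A B

/-- `ν` is ergodic for `m`. -/
def ErgodicRW (m : X → Measure X) (ν : Measure X) : Prop :=
  ∀ B : Set X, MeasurableSet B → (∀ x ∈ B, m x B = 1) → ν B = 0 ∨ ν B = 1

/-- `v ∈ ∂F_m(u)`, where `F_m(w) = TV_m(w)` for `w ∈ L² ∩ BV_m` and `+∞` otherwise.
This unfolds the subdifferential inequality: it forces `F_m(u) < ∞` and the inequality
is trivial for test functions `w` with `F_m(w) = ∞`. -/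
def subdiffFm (m : X → Measure X) (ν : Measure X) (u v : X → ℝ) : Prop :=
  MemLp u 2 ν ∧ MemLp v 2 ν ∧ MemBVm m ν u ∧
    ∀ w : X → ℝ, MemLp w 2 ν → MemBVm m ν w →
      (TVm m ν u).toReal + ∫ x, v x * (w x - u x) ∂ν ≤ (TVm m ν w).toReal

/-- `(λ, u)` is an `m`-eigenpair of the 1-Laplacian. -/
def IsEigenpair (m : X → Measure X) (ν : Measure X) (lam : ℝ) (u : X → ℝ) : Prop :=
  eLpNorm u 1 ν = 1 ∧
    ∃ ξ : X → ℝ, MemLp ξ ⊤ ν ∧ (∀ᵐ x ∂ν, ξ x ∈ signSet (u x)) ∧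
      subdiffFm m ν u fun x => lam * ξ x

/-- The `m`-Cheeger constant of a set `Ω`. -/
def h1m (m : X → Measure X) (ν : Measure X) (Ω : Set X) : ℝ≥0∞ :=
  sInf {r : ℝ≥0∞ | ∃ E : Set X, MeasurableSet E ∧ E ⊆ Ω ∧ 0 < ν E ∧ r = Pm m ν E / ν E}

/-- `Ω` is `m`-calibrable. -/
def Calibrable (m : X → Measure X) (ν : Measure X) (Ω : Set X) : Prop :=
  h1m m ν Ω = Pm m ν Ω / ν Ω

/-- The `m`-Cheeger constant of the whole space (for a probability measure `ν`). -/
def cheegerConst (m : X → Measure X) (ν : Measure X) : ℝ≥0∞ :=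
  sInf {r : ℝ≥0∞ | ∃ D : Set X, MeasurableSet D ∧ 0 < ν D ∧ ν D < 1 ∧
    r = Pm m ν D / min (ν D) (ν Dᶜ)}

/-- The Dirichlet energy functional `H_m(u) = (1/2) ∫∫ (u(x) − u(y))² dm_x(y) dν(x)`. -/
def Hm (m : X → Measure X) (ν : Measure X) (u : X → ℝ) : ℝ≥0∞ :=
  2⁻¹ * ∫⁻ x, ∫⁻ y, ENNReal.ofReal ((u x - u y) ^ 2) ∂(m x) ∂ν

end

/-! Every `E ⊆ Ω` has `ν E ≤ 1/2 ≤ ν(X∖E)`, so `h_m(X) ≤ P_m(E)/ν(E)`, and `λ_Ω^m = h_m(X)` makes `Ω`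
calibrable. For `E ⊆ X∖Ω`, reversibility gives `P_m(X∖Ω) = P_m(Ω)`. If `ν E ≤ ν(X∖E)` then
`P_m(Ω)/ν(X∖Ω) ≤ λ_Ω^m ≤ P_m(E)/ν(E)`; otherwise `ν(X∖E) ≥ ν(Ω)` forces
`P_m(E) ≥ λ_Ω^m ν(X∖E) ≥ P_m(Ω)`, and `ν E ≤ ν(X∖Ω)` concludes. -/

section

variable {X : Type*} [MeasurableSpace X] {m : X → Measure X} {ν : Measure X}

theorem Lm_comm (hrev : Reversible m ν) {A B : Set X} (hA : MeasurableSet A)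
    (hB : MeasurableSet B) : Lm m ν A B = Lm m ν B A := by
  have key := hrev (fun x y => (A ×ˢ B).indicator 1 (x, y))
    (measurable_one.indicator (hA.prod hB))
  simp_rw [Set.indicator_prod_one, lintegral_const_mul _ (measurable_one.indicator hB),
    lintegral_mul_const _ (measurable_one.indicator hA), lintegral_indicator_one hA,
    lintegral_indicator_one hB] at key
  simpa only [Lm, ← lintegral_indicator hA, ← lintegral_indicator hB, Set.indicator,
    Pi.one_apply, ite_mul, mul_ite, one_mul, mul_one, zero_mul, mul_zero] using key

theorem Pm_compl (hrev : Reversible m ν) {E : Set X} (hE : MeasurableSet E) :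
    Pm m ν Eᶜ = Pm m ν E := by
  rw [Pm, Pm, compl_compl, Lm_comm hrev hE.compl hE]

theorem calibrable_of_forall_subset {Ω : Set X} (hΩ : MeasurableSet Ω) (h0 : 0 < ν Ω)
    (h : ∀ E, MeasurableSet E → E ⊆ Ω → 0 < ν E → Pm m ν Ω / ν Ω ≤ Pm m ν E / ν E) :
    Calibrable m ν Ω :=
  le_antisymm (sInf_le ⟨Ω, hΩ, subset_rfl, h0, rfl⟩)
    (le_sInf fun _ ⟨E, hE, hEΩ, hE0, hr⟩ => hr ▸ h E hE hEΩ hE0)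

theorem cheegerConst_le {D : Set X} (hD : MeasurableSet D) (h0 : 0 < ν D) (h1 : ν D < 1) :
    cheegerConst m ν ≤ Pm m ν D / min (ν D) (ν Dᶜ) :=
  sInf_le ⟨D, hD, h0, h1, rfl⟩

theorem measure_le_measure_compl_of_le_half [IsProbabilityMeasure ν] {E : Set X}
    (hE : MeasurableSet E) (h : ν E ≤ 1 / 2) : ν E ≤ ν Eᶜ := by
  rw [prob_compl_eq_one_sub hE]
  calc ν E ≤ 1 / 2 := h
    _ = 1 - 1 / 2 := (ENNReal.sub_half one_ne_top).symm
    _ ≤ 1 - ν E := tsub_le_tsub_left h 1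

theorem Pm_div_le_of_subset [IsProbabilityMeasure ν] {Ω E : Set X} (hhalf : ν Ω ≤ 1 / 2)
    (hcheeger : Pm m ν Ω / ν Ω ≤ cheegerConst m ν) (hE : MeasurableSet E) (hEΩ : E ⊆ Ω)
    (hE0 : 0 < ν E) : Pm m ν Ω / ν Ω ≤ Pm m ν E / ν E := by
  have hEhalf : ν E ≤ 1 / 2 := (measure_mono hEΩ).trans hhalf
  have hE1 : ν E < 1 := hEhalf.trans_lt (ENNReal.half_lt_self one_ne_zero one_ne_top)
  have hbound := hcheeger.trans (cheegerConst_le hE hE0 hE1)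
  rwa [min_eq_left (measure_le_measure_compl_of_le_half hE hEhalf)] at hbound

theorem Pm_div_measure_compl_le_of_subset_compl [IsProbabilityMeasure ν] {Ω E : Set X}
    (hΩ : MeasurableSet Ω) (h0 : 0 < ν Ω) (hhalf : ν Ω ≤ 1 / 2)
    (hcheeger : Pm m ν Ω / ν Ω ≤ cheegerConst m ν) (hE : MeasurableSet E) (hEΩ : E ⊆ Ωᶜ)
    (hE0 : 0 < ν E) : Pm m ν Ω / ν Ωᶜ ≤ Pm m ν E / ν E := by
  have hΩEc : ν Ω ≤ ν Eᶜ := measure_mono (subset_compl_comm.mp hEΩ)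
  have hE1 : ν E < 1 := prob_le_one.lt_of_ne fun h =>
    (h0.trans_le hΩEc).ne' ((prob_compl_eq_zero_iff hE).mpr h)
  have hbound := hcheeger.trans (cheegerConst_le hE hE0 hE1)
  rcases min_cases (ν E) (ν Eᶜ) with ⟨hmin, -⟩ | ⟨hmin, -⟩ <;> rw [hmin] at hbound
  · calc Pm m ν Ω / ν Ωᶜ ≤ Pm m ν Ω / ν Ω :=
          ENNReal.div_le_div_left (measure_le_measure_compl_of_le_half hΩ hhalf) _
      _ ≤ Pm m ν E / ν E := hbound
  · have hP : Pm m ν Ω ≤ Pm m ν E :=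
      calc Pm m ν Ω = ν Ω * (Pm m ν Ω / ν Ω) :=
            (ENNReal.mul_div_cancel h0.ne' (measure_ne_top _ _)).symm
        _ ≤ ν Eᶜ * (Pm m ν E / ν Eᶜ) := by gcongr
        _ ≤ Pm m ν E := ENNReal.mul_div_le
    exact ENNReal.div_le_div hP (measure_mono hEΩ)

end

theorem cheeger_attained_implies_calibrable_general
    {X : Type*} [MeasurableSpace X]
    (m : X → Measure X)
    (ν : Measure X) [IsProbabilityMeasure ν] (hrev : Reversible m ν)
    (Ω : Set X) (hΩ : MeasurableSet Ω)
    (h0 : 0 < ν Ω) (hhalf : ν Ω ≤ 1 / 2)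
    (heq : cheegerConst m ν = Pm m ν Ω / ν Ω) :
    Calibrable m ν Ω ∧ Calibrable m ν Ωᶜ := by
  have h0c : 0 < ν Ωᶜ := h0.trans_le (measure_le_measure_compl_of_le_half hΩ hhalf)
  refine ⟨calibrable_of_forall_subset hΩ h0 fun E hE hEΩ hE0 =>
      Pm_div_le_of_subset hhalf heq.ge hE hEΩ hE0,
    calibrable_of_forall_subset hΩ.compl h0c fun E hE hEΩ hE0 => ?_⟩
  rw [Pm_compl hrev hΩ]
  exact Pm_div_measure_compl_le_of_subset_compl hΩ h0 hhalf heq.ge hE hEΩ hE0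

/-- If `ν` is an invariant and reversible probability measure, `0 < ν(Ω) ≤ 1/2` and
`h_m(X) = λ_Ω^m = P_m(Ω)/ν(Ω)`, then both `Ω` and `X∖Ω` are `m`-calibrable. -/
theorem cheeger_attained_implies_calibrable
    {X : Type*} [MetricSpace X] [PolishSpace X] [MeasurableSpace X] [BorelSpace X]
    (m : X → Measure X) (hprob : ∀ x, IsProbabilityMeasure (m x))
    (hker : MeasurableKernel m)
    (ν : Measure X) [IsProbabilityMeasure ν] (hrev : Reversible m ν)
    (hconn : MConnected m ν)
    (Ω : Set X) (hΩ : MeasurableSet Ω)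
    (h0 : 0 < ν Ω) (hhalf : ν Ω ≤ 1 / 2)
    (heq : cheegerConst m ν = Pm m ν Ω / ν Ω) :
    Calibrable m ν Ω ∧ Calibrable m ν Ωᶜ :=
  cheeger_attained_implies_calibrable_general m ν hrev Ω hΩ h0 hhalf heq
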